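/- Consider one inner loop of SARAH (SARAH-IN) with each f_i L-smooth, P τ-gradient dominated, learning rate η ≤ 2 / ( L ( sqrt(1 + (4m/b)·((n−b)/(n−1))) + 1 ) ), and output w̃ equal to w_t with t chosen uniformly at random from {0,1,...,m}. Then E[||∇P(w̃)||²] ≤ (2τ/(η(m+1)))·||∇P(w_0)||². -/

import Mathlib

open scoped BigOperators

noncomputable section

/-- Vectors in `ℝ^d`. -/
abbrev Vec (d : ℕ) := EuclideanSpace ℝ (Fin d)

/-- The type of mini-batches of size `b` from `{1,…,n}` (modeled as `Fin n`). -/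
def Batch (n b : ℕ) : Type := {s : Finset (Fin n) // s.card = b}

instance (n b : ℕ) : Fintype (Batch n b) :=
  inferInstanceAs (Fintype {s : Finset (Fin n) // s.card = b})

/-- Expectation (uniform average) over a finite sample space. -/
def expec {Ω : Type*} [Fintype Ω] (F : Ω → ℝ) : ℝ :=
  (Fintype.card Ω : ℝ)⁻¹ * ∑ ω, F ω

/-- The SARAH-IN state `(w_t, v_t)` given a starting point `w0`, a learning rate `η`,
a batch size `b` and a sequence of mini-batches `I` (where `I t` is the batch used to
form `v_t`, for `t ≥ 1`). -/
def sarahState {d n : ℕ} (f : Fin n → Vec d → ℝ) (w0 : Vec d) (η : ℝ) (b : ℕ)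
    (I : ℕ → Finset (Fin n)) : ℕ → Vec d × Vec d
  | 0 => (w0, (n : ℝ)⁻¹ • ∑ i, gradient (f i) w0)
  | t + 1 =>
    let p := sarahState f w0 η b I t
    let w' := p.1 - η • p.2
    (w', (b : ℝ)⁻¹ • ∑ i ∈ I (t + 1), (gradient (f i) w' - gradient (f i) p.1) + p.2)

/-- Extend a finite sequence of mini-batches to all of `ℕ` (indices `≥ T` are irrelevant). -/
def pad {n b T : ℕ} (ω : Fin T → Batch n b) : ℕ → Finset (Fin n) :=
  fun t => if h : t < T then (ω ⟨t, h⟩).1 else ∅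

/-!
Write `w_t, v_t` for the iterates. The descent lemma for the `L`-smooth `P` gives
`P w_{t+1} ≤ P w_t - η/2 ‖∇P w_t‖² + η/2 ‖∇P w_t - v_t‖² - η/2 (1 - Lη) ‖v_t‖²`.
Averaged over the fresh mini-batch, the new estimator error `∇P w_{t+1} - v_{t+1}` is the old one
minus a centred mean of `b` of the `n` gradient increments, each of norm at most `Lη ‖v_t‖`;
by the variance of a sample mean drawn without replacement, the mean square error grows by at
most `ρ (Lη)² ‖v_t‖²` with `ρ = (n - b) / (b (n - 1))`, and it vanishes at `t = 0`. Summed over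
`t ≤ m`, the accumulated errors are absorbed by the `‖v_t‖²` terms as soon as
`m ρ (Lη)² ≤ 1 - Lη`, which is the condition on `η`. What is left is
`η/2 ∑_t E ‖∇P w_t‖² ≤ P w_0 - P w_* ≤ τ ‖∇P w_0‖²`.
-/

open scoped RealInnerProductSpace
open Finset

section Descent

variable {E : Type*} [NormedAddCommGroup E] [InnerProductSpace ℝ E] [CompleteSpace E]

theorem gradient_const_mul_sum {ι : Type*} [Fintype ι] {f : ι → E → ℝ}
    (hf : ∀ i, Differentiable ℝ (f i)) (c : ℝ) (x : E) :
    gradient (fun w => c * ∑ i, f i w) x = c • ∑ i, gradient (f i) x := by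
  rw [gradient, fderiv_const_mul (by fun_prop), fderiv_fun_sum fun i _ => hf i x]
  simp [gradient, map_smul, map_sum]

variable {F : E → ℝ} {L : ℝ}

theorem le_add_inner_gradient_add_sq_of_lipschitz_gradient (hF : Differentiable ℝ F)
    (hlip : ∀ x y, ‖gradient F x - gradient F y‖ ≤ L * ‖x - y‖) (x y : E) :
    F y ≤ F x + ⟪gradient F x, y - x⟫ + L / 2 * ‖y - x‖ ^ 2 := by
  set u := y - x
  let φ : ℝ → ℝ := fun t => F (x + t • u) - t * ⟪gradient F x, u⟫ - L / 2 * t ^ 2 * ‖u‖ ^ 2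
  have hφ : ∀ t : ℝ, HasDerivAt φ
      (⟪gradient F (x + t • u) - gradient F x, u⟫ - L * t * ‖u‖ ^ 2) t := by
    intro t
    have hline : HasDerivAt (fun s : ℝ => x + s • u) u t := by
      simpa using ((hasDerivAt_id t).smul_const u).const_add x
    have hFline := (hF (x + t • u)).hasGradientAt.hasFDerivAt.comp_hasDerivAt t hline
    have hquad := ((hasDerivAt_pow 2 t).const_mul (L / 2)).mul_const (‖u‖ ^ 2)
    refine ((hFline.sub ((hasDerivAt_id t).mul_const ⟪gradient F x, u⟫)).sub hquad).congr_deriv ?_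
    simp only [InnerProductSpace.toDual_apply_apply, inner_sub_left]
    ring
  have hφ_anti : AntitoneOn φ (Set.Icc 0 1) := by
    refine antitoneOn_of_deriv_nonpos (convex_Icc 0 1)
      (fun t _ => (hφ t).continuousAt.continuousWithinAt)
      (fun t _ => (hφ t).differentiableAt.differentiableWithinAt) fun t ht => ?_
    rw [interior_Icc] at ht
    rw [(hφ t).deriv, sub_nonpos]
    calc ⟪gradient F (x + t • u) - gradient F x, u⟫
        ≤ ‖gradient F (x + t • u) - gradient F x‖ * ‖u‖ := real_inner_le_norm _ _
      _ ≤ L * ‖t • u‖ * ‖u‖ := by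
        gcongr
        simpa using hlip (x + t • u) x
      _ = L * t * ‖u‖ ^ 2 := by rw [norm_smul, Real.norm_of_nonneg ht.1.le]; ring
  have := hφ_anti (Set.left_mem_Icc.2 zero_le_one) (Set.right_mem_Icc.2 zero_le_one) zero_le_one
  simp only [φ, one_smul, zero_smul, add_zero, add_sub_cancel, u] at this
  linarith

theorem apply_sub_smul_le_of_lipschitz_gradient (hF : Differentiable ℝ F)
    (hlip : ∀ x y, ‖gradient F x - gradient F y‖ ≤ L * ‖x - y‖) {η : ℝ} (hη : 0 ≤ η)
    (w v : E) :
    F (w - η • v) ≤ F w - η / 2 * ‖gradient F w‖ ^ 2 + η / 2 * ‖gradient F w - v‖ ^ 2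
      - η / 2 * (1 - L * η) * ‖v‖ ^ 2 := by
  have h := le_add_inner_gradient_add_sq_of_lipschitz_gradient hF hlip w (w - η • v)
  rw [sub_sub_cancel_left, inner_neg_right, real_inner_smul_right, norm_neg, norm_smul,
    Real.norm_of_nonneg hη] at h
  linear_combination h - η / 2 * norm_sub_sq_real (gradient F w) v

end Descent

theorem Nat.mul_choose_sub_one {n k : ℕ} (hn : 1 ≤ n) (hk : 1 ≤ k) :
    n * (n - 1).choose (k - 1) = n.choose k * k := by
  simpa [Nat.sub_add_cancel hn, Nat.sub_add_cancel hk] using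
    Nat.add_one_mul_choose_eq (n - 1) (k - 1)

-- `(n - b) / (n - 1)` is the finite population correction of the variance `1 / b` of a mean of
-- `b` independent samples.
def sampleMeanVarianceFactor (n b : ℕ) : ℝ := ((n : ℝ) - b) / (b * ((n : ℝ) - 1))

theorem sampleMeanVarianceFactor_nonneg {n b : ℕ} (hbn : b ≤ n) :
    0 ≤ sampleMeanVarianceFactor n b := by
  rcases Nat.eq_zero_or_pos b with rfl | hb
  · simp [sampleMeanVarianceFactor]
  · have : (1 : ℝ) ≤ b := by exact_mod_cast hb
    have : (b : ℝ) ≤ n := by exact_mod_cast hbn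
    exact div_nonneg (by linarith) (by nlinarith)

theorem Nat.cast_choose_sub_two_div_sq {n b : ℕ} (hn : 2 ≤ n) (hb : 1 ≤ b) (hbn : b ≤ n) :
    ((n - 2).choose (b - 1) : ℝ) / b ^ 2 = n.choose b * sampleMeanVarianceFactor n b / n := by
  have h₁ : (n : ℝ) * (n - 1).choose (b - 1) = n.choose b * b := by
    exact_mod_cast Nat.mul_choose_sub_one (by omega : 1 ≤ n) hb
  have h₂ := Nat.choose_mul_succ_eq (n - 2) (b - 1)
  rw [show n - 2 + 1 = n - 1 by omega, show n - 1 - (b - 1) = n - b by omega] at h₂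
  have h₂' : ((n - 2).choose (b - 1) : ℝ) * ((n : ℝ) - 1)
      = (n - 1).choose (b - 1) * ((n : ℝ) - b) := by
    have := congrArg (Nat.cast (R := ℝ)) h₂
    push_cast [Nat.cast_sub (by omega : 1 ≤ n), Nat.cast_sub hbn] at this
    exact this
  have : (0 : ℝ) < n - 1 := by
    have : (2 : ℝ) ≤ n := by exact_mod_cast hn
    linarith
  have : (0 : ℝ) < b := by exact_mod_cast hb
  rw [sampleMeanVarianceFactor]
  field_simp
  linear_combination (n : ℝ) * h₂' + ((n : ℝ) - b) * h₁

theorem Finset.card_filter_mem_powersetCard {α : Type*} [DecidableEq α] {t : Finset α} {a : α}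
    (ha : a ∈ t) {k : ℕ} (hk : 1 ≤ k) :
    #{s ∈ t.powersetCard k | a ∈ s} = (#t - 1).choose (k - 1) := by
  simpa using card_filter_powersetCard_subset {a} t k (by simpa) (by simpa)

section Sampling

variable {ι : Type*} [Fintype ι] {E : Type*} [NormedAddCommGroup E] [InnerProductSpace ℝ E]

theorem sum_sub_mean_eq_zero [Nonempty ι] (z : ι → E) :
    ∑ i, (z i - (Fintype.card ι : ℝ)⁻¹ • ∑ j, z j) = 0 := by
  rw [sum_sub_distrib, sum_const, card_univ, ← Nat.cast_smul_eq_nsmul ℝ, smul_smul,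
    mul_inv_cancel₀ (by simp [Fintype.card_ne_zero]), one_smul, sub_self]

theorem sum_norm_sub_mean_sq_le [Nonempty ι] (z : ι → E) :
    ∑ i, ‖z i - (Fintype.card ι : ℝ)⁻¹ • ∑ j, z j‖ ^ 2 ≤ ∑ i, ‖z i‖ ^ 2 := by
  set z' := (Fintype.card ι : ℝ)⁻¹ • ∑ j, z j
  calc ∑ i, ‖z i - z'‖ ^ 2
      ≤ ∑ i, ‖z i - z'‖ ^ 2 + Fintype.card ι * ‖z'‖ ^ 2 := le_add_of_nonneg_right (by positivity)
    _ = ∑ i, (‖z i - z'‖ ^ 2 + 2 * ⟪z i - z', z'⟫ + ‖z'‖ ^ 2) := by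
      rw [sum_add_distrib, sum_add_distrib, ← mul_sum, ← sum_inner, sum_sub_mean_eq_zero]
      simp
    _ = ∑ i, ‖z i‖ ^ 2 := by simp only [← norm_add_sq_real, sub_add_cancel]

theorem norm_mean_sub_mean_le [Nonempty ι] {g : ι → E → E} {L : ℝ}
    (hg : ∀ i x y, ‖g i x - g i y‖ ≤ L * ‖x - y‖) (x y : E) :
    ‖(Fintype.card ι : ℝ)⁻¹ • ∑ i, g i x - (Fintype.card ι : ℝ)⁻¹ • ∑ i, g i y‖
      ≤ L * ‖x - y‖ := by
  have hcard : (0 : ℝ) < Fintype.card ι := by exact_mod_cast Fintype.card_pos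
  rw [← smul_sub, ← sum_sub_distrib, norm_smul, Real.norm_of_nonneg (by positivity),
    inv_mul_le_iff₀ hcard]
  calc ‖∑ i, (g i x - g i y)‖ ≤ ∑ i, ‖g i x - g i y‖ := norm_sum_le _ _
    _ ≤ ∑ _i : ι, L * ‖x - y‖ := sum_le_sum fun i _ => hg i x y
    _ = Fintype.card ι * (L * ‖x - y‖) := by simp

variable [DecidableEq ι] {b : ℕ}

theorem Finset.sum_powersetCard_sum {M : Type*} [AddCommMonoid M] (hb : 1 ≤ b) (z : ι → M) :
    ∑ s ∈ powersetCard b univ, ∑ i ∈ s, z i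
      = (Fintype.card ι - 1).choose (b - 1) • ∑ i, z i := by
  rw [sum_comm' (t' := univ) (s' := fun i => {s ∈ powersetCard b univ | i ∈ s}) (by simp),
    smul_sum]
  refine sum_congr rfl fun i _ => ?_
  rw [sum_const, card_filter_mem_powersetCard (mem_univ i) hb, card_univ]

theorem Finset.sum_powersetCard_sum_sum_compl {M : Type*} [AddCommMonoid M] (hb : 1 ≤ b)
    (c : ι → ι → M) :
    ∑ s ∈ powersetCard b univ, ∑ i ∈ s, ∑ j ∈ sᶜ, c i j
      = (Fintype.card ι - 2).choose (b - 1) • ∑ i, ∑ j ∈ univ.erase i, c i j := by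
  rw [sum_comm' (t' := univ) (s' := fun i => {s ∈ powersetCard b univ | i ∈ s}) (by simp),
    smul_sum]
  refine sum_congr rfl fun i _ => ?_
  rw [sum_comm' (t' := univ.erase i)
    (s' := fun j => {s ∈ powersetCard b (univ.erase j) | i ∈ s}) ?_, smul_sum]
  · refine sum_congr rfl fun j hj => ?_
    rw [sum_const, card_filter_mem_powersetCard (mem_erase.2 ⟨(ne_of_mem_erase hj).symm,
      mem_univ i⟩) hb, card_erase_of_mem (mem_univ j), card_univ, Nat.sub_sub]
  · intro s j
    simp only [mem_filter, mem_powersetCard, subset_erase, mem_compl, mem_erase]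
    grind

theorem sum_powersetCard_norm_sum_sq_of_sum_eq_zero (hb : 1 ≤ b) {y : ι → E}
    (hy : ∑ i, y i = 0) :
    ∑ s ∈ powersetCard b univ, ‖∑ i ∈ s, y i‖ ^ 2
      = (Fintype.card ι - 2).choose (b - 1) * ∑ i, ‖y i‖ ^ 2 := by
  -- a pair `i ≠ j` is separated by `C(n - 2, b - 1)` of the `b`-subsets
  have hsq : ∀ s : Finset ι, ‖∑ i ∈ s, y i‖ ^ 2 = -∑ i ∈ s, ∑ j ∈ sᶜ, ⟪y i, y j⟫ := by
    intro s
    have hcompl : ∑ i ∈ s, y i = -∑ j ∈ sᶜ, y j :=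
      eq_neg_of_add_eq_zero_left (by rw [sum_add_sum_compl, hy])
    rw [← real_inner_self_eq_norm_sq]
    nth_rewrite 2 [hcompl]
    simp_rw [inner_neg_right, sum_inner, inner_sum]
  have hoff : ∀ i, ∑ j ∈ univ.erase i, ⟪y i, y j⟫ = -‖y i‖ ^ 2 := by
    intro i
    have h : ∑ j, ⟪y i, y j⟫ = 0 := by rw [← inner_sum, hy, inner_zero_right]
    rw [← add_sum_erase _ _ (mem_univ i), real_inner_self_eq_norm_sq] at h
    linarith
  simp_rw [hsq, sum_neg_distrib, sum_powersetCard_sum_sum_compl hb, hoff, sum_neg_distrib,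
    nsmul_eq_mul, mul_neg, neg_neg]

theorem sum_powersetCard_batchMean_sub_mean_eq_zero (hb : 1 ≤ b) (hbn : b ≤ Fintype.card ι)
    (z : ι → E) :
    ∑ s ∈ powersetCard b univ,
      ((b : ℝ)⁻¹ • ∑ i ∈ s, z i - (Fintype.card ι : ℝ)⁻¹ • ∑ i, z i) = 0 := by
  have hcoeff : (b : ℝ)⁻¹ * (Fintype.card ι - 1).choose (b - 1)
      = (Fintype.card ι).choose b * (Fintype.card ι : ℝ)⁻¹ := by
    have h : (Fintype.card ι : ℝ) * (Fintype.card ι - 1).choose (b - 1)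
        = (Fintype.card ι).choose b * b := by
      exact_mod_cast Nat.mul_choose_sub_one (by omega : 1 ≤ Fintype.card ι) hb
    have : (0 : ℝ) < b := by exact_mod_cast hb
    have : (0 : ℝ) < Fintype.card ι := by exact_mod_cast (by omega : 0 < Fintype.card ι)
    field_simp
    linarith
  rw [sum_sub_distrib, ← smul_sum, sum_powersetCard_sum hb, sum_const, card_powersetCard,
    card_univ, ← Nat.cast_smul_eq_nsmul ℝ, ← Nat.cast_smul_eq_nsmul ℝ, smul_smul, smul_smul,
    hcoeff, sub_self]

theorem sum_powersetCard_norm_batchMean_sub_mean_sq_le (hn : 2 ≤ Fintype.card ι) (hb : 1 ≤ b)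
    (hbn : b ≤ Fintype.card ι) (z : ι → E) :
    ∑ s ∈ powersetCard b univ,
        ‖(b : ℝ)⁻¹ • ∑ i ∈ s, z i - (Fintype.card ι : ℝ)⁻¹ • ∑ i, z i‖ ^ 2
      ≤ (Fintype.card ι).choose b * sampleMeanVarianceFactor (Fintype.card ι) b
          * ((Fintype.card ι : ℝ)⁻¹ * ∑ i, ‖z i‖ ^ 2) := by
  have : Nonempty ι := Fintype.card_pos_iff.1 (by omega)
  set z' := (Fintype.card ι : ℝ)⁻¹ • ∑ i, z i
  have hshift : ∀ s ∈ powersetCard b univ,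
      (b : ℝ)⁻¹ • ∑ i ∈ s, z i - z' = (b : ℝ)⁻¹ • ∑ i ∈ s, (z i - z') := by
    intro s hs
    rw [sum_sub_distrib, sum_const, mem_powersetCard_univ.1 hs, smul_sub,
      ← Nat.cast_smul_eq_nsmul ℝ, smul_smul, inv_mul_cancel₀ (by positivity), one_smul]
  calc ∑ s ∈ powersetCard b univ, ‖(b : ℝ)⁻¹ • ∑ i ∈ s, z i - z'‖ ^ 2
      = (b : ℝ)⁻¹ ^ 2 * ∑ s ∈ powersetCard b univ, ‖∑ i ∈ s, (z i - z')‖ ^ 2 := by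
        rw [mul_sum]
        refine sum_congr rfl fun s hs => ?_
        rw [hshift s hs, norm_smul, mul_pow, Real.norm_of_nonneg (by positivity)]
    _ = ((Fintype.card ι - 2).choose (b - 1) : ℝ) / b ^ 2 * ∑ i, ‖z i - z'‖ ^ 2 := by
        rw [sum_powersetCard_norm_sum_sq_of_sum_eq_zero hb (sum_sub_mean_eq_zero z)]
        ring
    _ ≤ ((Fintype.card ι - 2).choose (b - 1) : ℝ) / b ^ 2 * ∑ i, ‖z i‖ ^ 2 :=
        mul_le_mul_of_nonneg_left (sum_norm_sub_mean_sq_le z) (by positivity)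
    _ = _ := by
        rw [Nat.cast_choose_sub_two_div_sq hn hb hbn]
        ring

theorem sum_powersetCard_norm_sub_recursive_estimator_sq_le {g : ι → E → E} {G : E → E}
    {L : ℝ} (hG : ∀ x, G x = (Fintype.card ι : ℝ)⁻¹ • ∑ i, g i x)
    (hg : ∀ i x y, ‖g i x - g i y‖ ≤ L * ‖x - y‖)
    (hn : 2 ≤ Fintype.card ι) (hb : 1 ≤ b) (hbn : b ≤ Fintype.card ι) (w w' v : E) :
    ∑ s ∈ powersetCard b univ, ‖G w' - ((b : ℝ)⁻¹ • ∑ i ∈ s, (g i w' - g i w) + v)‖ ^ 2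
      ≤ (Fintype.card ι).choose b * (‖G w - v‖ ^ 2
          + sampleMeanVarianceFactor (Fintype.card ι) b * (L * ‖w' - w‖) ^ 2) := by
  set n := Fintype.card ι
  set z : ι → E := fun i => g i w' - g i w
  set X : Finset ι → E := fun s => (b : ℝ)⁻¹ • ∑ i ∈ s, z i - (n : ℝ)⁻¹ • ∑ i, z i
  have hsplit : ∀ s, G w' - ((b : ℝ)⁻¹ • ∑ i ∈ s, z i + v) = (G w - v) - X s := by
    intro s
    simp only [X, z, hG, sum_sub_distrib, smul_sub]
    abel
  have hz : (n : ℝ)⁻¹ * ∑ i, ‖z i‖ ^ 2 ≤ (L * ‖w' - w‖) ^ 2 := by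
    rw [inv_mul_le_iff₀ (by exact_mod_cast (by omega : 0 < n))]
    calc ∑ i, ‖z i‖ ^ 2 ≤ ∑ _i : ι, (L * ‖w' - w‖) ^ 2 :=
          sum_le_sum fun i _ => pow_le_pow_left₀ (norm_nonneg _) (hg i w' w) 2
      _ = n * (L * ‖w' - w‖) ^ 2 := by simp [n]
  have := sampleMeanVarianceFactor_nonneg hbn
  calc ∑ s ∈ powersetCard b univ, ‖G w' - ((b : ℝ)⁻¹ • ∑ i ∈ s, z i + v)‖ ^ 2
      = ∑ s ∈ powersetCard b univ, (‖G w - v‖ ^ 2 - 2 * ⟪G w - v, X s⟫ + ‖X s‖ ^ 2) := by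
        simp only [hsplit, norm_sub_sq_real]
    _ = n.choose b * ‖G w - v‖ ^ 2 + ∑ s ∈ powersetCard b univ, ‖X s‖ ^ 2 := by
        rw [sum_add_distrib, sum_sub_distrib, ← mul_sum, ← inner_sum,
          sum_powersetCard_batchMean_sub_mean_eq_zero hb hbn, sum_const, card_powersetCard,
          card_univ]
        simp [n]
    _ ≤ n.choose b * ‖G w - v‖ ^ 2
          + n.choose b * sampleMeanVarianceFactor n b * ((n : ℝ)⁻¹ * ∑ i, ‖z i‖ ^ 2) := by
        gcongr
        exact sum_powersetCard_norm_batchMean_sub_mean_sq_le hn hb hbn z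
    _ ≤ n.choose b * (‖G w - v‖ ^ 2 + sampleMeanVarianceFactor n b * (L * ‖w' - w‖) ^ 2) := by
        rw [mul_add, mul_assoc]
        gcongr

end Sampling

theorem Fintype.card_smul_sum_eq_sum_sum_update {α β M : Type*} [Fintype α] [DecidableEq α]
    [Fintype β] [AddCommMonoid M] (i : α) (F : (α → β) → M) :
    Fintype.card β • ∑ ω, F ω = ∑ ω, ∑ s, F (Function.update ω i s) := by
  set e := Equiv.funSplitAt i β
  have hupdate : ∀ x s r, Function.update (e.symm (x, r)) i s = e.symm (s, r) := by
    intro x s r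
    funext j
    by_cases hj : j = i
    · subst hj
      simp [e, Equiv.funSplitAt, Equiv.piSplitAt]
    · simp [e, Equiv.funSplitAt, Equiv.piSplitAt, hj]
  rw [← Equiv.sum_comp e.symm, ← Equiv.sum_comp e.symm, Fintype.sum_prod_type,
    Fintype.sum_prod_type, sum_comm, ← card_univ, ← sum_const]
  simp only [hupdate]

theorem mul_sum_range_le_sub_of_descent {Φ g A u : ℕ → ℝ} {a c κ : ℝ} {m : ℕ} (ha : 0 ≤ a)
    (hc : 0 ≤ c) (hu : ∀ t, 0 ≤ u t) (hcκ : c * m ≤ κ) (hA₀ : A 0 = 0)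
    (hA : ∀ t < m, A (t + 1) ≤ A t + c * u t)
    (hΦ : ∀ t, Φ (t + 1) ≤ Φ t - a * g t + a * A t - a * κ * u t) :
    a * ∑ t ∈ range (m + 1), g t ≤ Φ 0 - Φ (m + 1) := by
  set U := ∑ t ∈ range (m + 1), u t
  have hU : 0 ≤ U := sum_nonneg fun t _ => hu t
  have hA_le : ∀ t ≤ m, A t ≤ c * ∑ j ∈ range t, u j := by
    intro t ht
    induction t with
    | zero => simp [hA₀]
    | succ t ih =>
      rw [sum_range_succ, mul_add]
      linarith [hA t ht, ih (by omega)]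
  have hA_sum : ∑ t ∈ range (m + 1), A t ≤ c * m * U := by
    rw [sum_range_succ', hA₀, add_zero]
    calc ∑ t ∈ range m, A (t + 1) ≤ ∑ _t ∈ range m, c * U := by
          refine sum_le_sum fun t ht => (hA_le (t + 1) (by simp at ht; omega)).trans ?_
          exact mul_le_mul_of_nonneg_left (sum_le_sum_of_subset_of_nonneg
            (range_subset_range.2 (by simp at ht; omega)) fun j _ _ => hu j) hc
      _ = c * m * U := by simp; ring
  have htel : Φ (m + 1) - Φ 0 ≤ ∑ t ∈ range (m + 1), (a * A t - a * g t - a * κ * u t) := by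
    rw [← sum_range_sub]
    exact sum_le_sum fun t _ => by linarith [hΦ t]
  simp only [sum_sub_distrib, ← mul_sum] at htel
  have : a * ∑ t ∈ range (m + 1), A t ≤ a * (κ * U) :=
    mul_le_mul_of_nonneg_left (hA_sum.trans (mul_le_mul_of_nonneg_right hcκ hU)) ha
  linarith

theorem mul_sq_le_one_sub_of_le_two_div {L η q : ℝ} (hL : 0 < L) (hη : 0 ≤ η) (hq : 0 ≤ q)
    (h : η ≤ 2 / (L * (√(1 + 4 * q) + 1))) : q * (L * η) ^ 2 ≤ 1 - L * η := by
  set r := √(1 + 4 * q)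
  have hr : r ^ 2 = 1 + 4 * q := Real.sq_sqrt (by positivity)
  have hr₁ : 1 ≤ r := Real.one_le_sqrt.2 (by linarith)
  have hLη : L * η * (r + 1) ≤ 2 := by
    rw [le_div_iff₀ (by positivity)] at h
    linarith
  -- `2 / (r + 1)` is the positive root of `q x ^ 2 + x = 1`, since `4 q = (r - 1) (r + 1)`
  nlinarith [mul_le_mul_of_nonneg_left hLη (mul_nonneg (sub_nonneg.2 hr₁) (by positivity))]

theorem expec_prod_fin {Ω : Type*} [Fintype Ω] {m : ℕ} (F : Ω → ℕ → ℝ) :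
    expec (fun p : Ω × Fin (m + 1) => F p.1 p.2)
      = ((Fintype.card Ω : ℝ) * (m + 1))⁻¹ * ∑ t ∈ range (m + 1), ∑ ω, F ω t := by
  rw [expec, Fintype.card_prod, Fintype.card_fin, Fintype.sum_prod_type, sum_comm,
    ← Fin.sum_univ_eq_sum_range (fun t => ∑ ω, F ω t)]
  push_cast
  rfl

section Sarah

variable {d n b : ℕ} (f : Fin n → Vec d → ℝ) (w0 : Vec d) (η : ℝ)

theorem card_batch : Fintype.card (Batch n b) = n.choose b := by
  rw [show Fintype.card (Batch n b) = Fintype.card {s : Finset (Fin n) // s.card = b} from rfl,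
    Fintype.card_finset_len, Fintype.card_fin]

theorem sum_batch_eq_sum_powersetCard {M : Type*} [AddCommMonoid M] (F : Finset (Fin n) → M) :
    ∑ s : Batch n b, F s.1 = ∑ s ∈ powersetCard b univ, F s :=
  (sum_subtype (powersetCard b univ) (fun _ => mem_powersetCard_univ) F).symm

theorem pad_update_of_ne {T : ℕ} (ω : Fin T → Batch n b) (i : Fin T) (s : Batch n b) {j : ℕ}
    (hj : j ≠ i) : pad (Function.update ω i s) j = pad ω j := by
  unfold pad
  split_ifs with h
  · rw [Function.update_of_ne (fun h' => hj (by rw [← h']))]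
  · rfl

theorem pad_update_self {T : ℕ} (ω : Fin T → Batch n b) (i : Fin T) (s : Batch n b) :
    pad (Function.update ω i s) i = s.1 := by
  simp [pad]

theorem sarahState_congr {I I' : ℕ → Finset (Fin n)} {t : ℕ} (h : ∀ j ≤ t, I j = I' j) :
    sarahState f w0 η b I t = sarahState f w0 η b I' t := by
  induction t with
  | zero => rfl
  | succ t ih => simp only [sarahState, ih fun j hj => h j (by omega), h (t + 1) le_rfl]

theorem sarahState_update_succ {m t : ℕ} (ht : t < m) (ω : Fin (m + 1) → Batch n b)
    (s : Batch n b) :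
    sarahState f w0 η b (pad (Function.update ω ⟨t + 1, by omega⟩ s)) (t + 1)
      = let p := sarahState f w0 η b (pad ω) t
        (p.1 - η • p.2,
          (b : ℝ)⁻¹ • ∑ i ∈ s.1, (gradient (f i) (p.1 - η • p.2) - gradient (f i) p.1) + p.2) := by
  rw [sarahState, sarahState_congr f w0 η fun j hj => pad_update_of_ne ω _ s (by simp; omega),
    pad_update_self]

theorem sum_norm_gradient_sub_sarahState_succ_le {P : Vec d → ℝ} {L : ℝ}
    (hG : ∀ x, gradient P x = (n : ℝ)⁻¹ • ∑ i, gradient (f i) x)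
    (hsmooth : ∀ i x y, ‖gradient (f i) x - gradient (f i) y‖ ≤ L * ‖x - y‖) (hη : 0 ≤ η)
    (hn : 2 ≤ n) (hb : 1 ≤ b) (hbn : b ≤ n) {m t : ℕ} (ht : t < m) :
    ∑ ω : Fin (m + 1) → Batch n b, ‖gradient P (sarahState f w0 η b (pad ω) (t + 1)).1
        - (sarahState f w0 η b (pad ω) (t + 1)).2‖ ^ 2
      ≤ ∑ ω : Fin (m + 1) → Batch n b,
          (‖gradient P (sarahState f w0 η b (pad ω) t).1 - (sarahState f w0 η b (pad ω) t).2‖ ^ 2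
            + sampleMeanVarianceFactor n b * (L * η) ^ 2
              * ‖(sarahState f w0 η b (pad ω) t).2‖ ^ 2) := by
  have hN : (0 : ℝ) < n.choose b := by exact_mod_cast Nat.choose_pos hbn
  refine le_of_mul_le_mul_left ?_ hN
  -- resample the batch used at step `t + 1`, on which the state at step `t` does not depend
  rw [← card_batch, ← nsmul_eq_mul,
    Fintype.card_smul_sum_eq_sum_sum_update ⟨t + 1, by omega⟩, mul_sum]
  refine sum_le_sum fun ω _ => ?_
  simp only [sarahState_update_succ f w0 η ht]
  set w := (sarahState f w0 η b (pad ω) t).1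
  set v := (sarahState f w0 η b (pad ω) t).2
  have hstep := sum_powersetCard_norm_sub_recursive_estimator_sq_le (G := gradient P)
    (by simpa using hG) hsmooth (by simpa) hb (by simpa) w (w - η • v) v
  rw [sub_sub_cancel_left, norm_neg, norm_smul, Real.norm_of_nonneg hη] at hstep
  simp only [Fintype.card_fin] at hstep
  rw [sum_batch_eq_sum_powersetCard (fun s => ‖gradient P (w - η • v)
    - ((b : ℝ)⁻¹ • ∑ i ∈ s, (gradient (f i) (w - η • v) - gradient (f i) w) + v)‖ ^ 2),
    card_batch]
  linarith

theorem mul_sum_sum_norm_gradient_sarahState_le {P : Vec d → ℝ} {L : ℝ}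
    (hP : Differentiable ℝ P) (hG : ∀ x, gradient P x = (n : ℝ)⁻¹ • ∑ i, gradient (f i) x)
    (hsmooth : ∀ i x y, ‖gradient (f i) x - gradient (f i) y‖ ≤ L * ‖x - y‖) (hη : 0 ≤ η)
    (hn : 2 ≤ n) (hb : 1 ≤ b) (hbn : b ≤ n) {m : ℕ}
    (hηm : m * sampleMeanVarianceFactor n b * (L * η) ^ 2 ≤ 1 - L * η) :
    η / 2 * ∑ t ∈ range (m + 1), ∑ ω : Fin (m + 1) → Batch n b,
        ‖gradient P (sarahState f w0 η b (pad ω) t).1‖ ^ 2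
      ≤ ∑ ω : Fin (m + 1) → Batch n b, (P w0 - P (sarahState f w0 η b (pad ω) (m + 1)).1) := by
  have hlip : ∀ x y, ‖gradient P x - gradient P y‖ ≤ L * ‖x - y‖ := by
    have : Nonempty (Fin n) := ⟨⟨0, by omega⟩⟩
    intro x y
    simpa [hG] using norm_mean_sub_mean_le hsmooth x y
  have := sampleMeanVarianceFactor_nonneg hbn
  rw [sum_sub_distrib]
  refine mul_sum_range_le_sub_of_descent
    (Φ := fun t => ∑ ω : Fin (m + 1) → Batch n b, P (sarahState f w0 η b (pad ω) t).1)
    (A := fun t => ∑ ω : Fin (m + 1) → Batch n b,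
      ‖gradient P (sarahState f w0 η b (pad ω) t).1 - (sarahState f w0 η b (pad ω) t).2‖ ^ 2)
    (u := fun t => ∑ ω : Fin (m + 1) → Batch n b, ‖(sarahState f w0 η b (pad ω) t).2‖ ^ 2)
    (c := sampleMeanVarianceFactor n b * (L * η) ^ 2) (κ := 1 - L * η)
    (by positivity) (by positivity) (fun t => by positivity) (by linarith) ?_
    (fun t ht => ?_) (fun t => ?_)
  · exact sum_eq_zero fun ω _ => by simp [sarahState, hG]
  · refine (sum_norm_gradient_sub_sarahState_succ_le f w0 η hG hsmooth hη hn hb hbn ht).trans_eq ?_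
    rw [sum_add_distrib, mul_sum]
  · refine (sum_le_sum fun ω _ => apply_sub_smul_le_of_lipschitz_gradient hP hlip hη
      (sarahState f w0 η b (pad ω) t).1 (sarahState f w0 η b (pad ω) t).2).trans_eq ?_
    simp only [sum_add_distrib, sum_sub_distrib, mul_sum]

end Sarah

theorem sarah_in_gradient_dominated_contraction_general
    {d n : ℕ} (hn : 2 ≤ n)
    (f : Fin n → Vec d → ℝ) (L : ℝ) (hL : 0 < L)
    (hdiff : ∀ i, Differentiable ℝ (f i))
    (hsmooth : ∀ i (w w' : Vec d),
      ‖gradient (f i) w - gradient (f i) w'‖ ≤ L * ‖w - w'‖)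
    (P : Vec d → ℝ) (hP : P = fun w => (n : ℝ)⁻¹ * ∑ i, f i w)
    (wstar : Vec d) (hmin : ∀ w, P wstar ≤ P w)
    (τ : ℝ) (hdom : ∀ w, P w - P wstar ≤ τ * ‖gradient P w‖ ^ 2)
    (w0 : Vec d) (η : ℝ) (hη : 0 < η) (b m : ℕ) (hb : 1 ≤ b) (hbn : b ≤ n)
    (hη2 : η ≤ 2 / (L * (Real.sqrt (1 + 4 * (m : ℝ) / (b : ℝ)
      * (((n : ℝ) - (b : ℝ)) / ((n : ℝ) - 1))) + 1))) :
    expec (fun p : (Fin (m + 1) → Batch n b) × Fin (m + 1) =>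
        ‖gradient P ((sarahState f w0 η b (pad p.1) (p.2 : ℕ)).1)‖ ^ 2)
      ≤ 2 * τ / (η * ((m : ℝ) + 1)) * ‖gradient P w0‖ ^ 2 := by
  have hG : ∀ x, gradient P x = (n : ℝ)⁻¹ • ∑ i, gradient (f i) x := by
    subst hP
    exact gradient_const_mul_sum hdiff _
  have hPdiff : Differentiable ℝ P := by
    subst hP
    fun_prop
  rw [div_mul_div_comm, mul_div_assoc, mul_assoc, ← sampleMeanVarianceFactor] at hη2
  have hηm := mul_sq_le_one_sub_of_le_two_div hL hη.le
    (mul_nonneg m.cast_nonneg (sampleMeanVarianceFactor_nonneg hbn)) hη2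
  have hM : (0 : ℝ) < Fintype.card (Fin (m + 1) → Batch n b) := by
    rw [Fintype.card_fun, card_batch, Fintype.card_fin]
    exact_mod_cast pow_pos (Nat.choose_pos hbn) _
  have hgap : ∑ ω : Fin (m + 1) → Batch n b, (P w0 - P (sarahState f w0 η b (pad ω) (m + 1)).1)
      ≤ Fintype.card (Fin (m + 1) → Batch n b) * (τ * ‖gradient P w0‖ ^ 2) := by
    calc _ ≤ ∑ _ω : Fin (m + 1) → Batch n b, τ * ‖gradient P w0‖ ^ 2 :=
          sum_le_sum fun ω _ => by linarith [hmin (sarahState f w0 η b (pad ω) (m + 1)).1, hdom w0]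
      _ = _ := by simp
  rw [expec_prod_fin (fun ω t => ‖gradient P (sarahState f w0 η b (pad ω) t).1‖ ^ 2),
    inv_mul_le_iff₀ (by positivity)]
  calc _ = 2 / η * (η / 2 * ∑ t ∈ range (m + 1), ∑ ω : Fin (m + 1) → Batch n b,
          ‖gradient P (sarahState f w0 η b (pad ω) t).1‖ ^ 2) := by field_simp
    _ ≤ 2 / η * (Fintype.card (Fin (m + 1) → Batch n b) * (τ * ‖gradient P w0‖ ^ 2)) :=
        mul_le_mul_of_nonneg_left
          ((mul_sum_sum_norm_gradient_sarahState_le f w0 η hPdiff hG hsmooth hη.le hn hb hbn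
            (by linarith)).trans hgap) (by positivity)
    _ = _ := by field_simp

/-- One inner loop of SARAH on a `τ`-gradient dominated `P` with small enough learning
rate and uniformly chosen output satisfies `E‖∇P(w̃)‖² ≤ (2τ/(η(m+1)))‖∇P(w₀)‖²`. -/
theorem sarah_in_gradient_dominated_contraction
    {d n : ℕ} (hn : 2 ≤ n)
    (f : Fin n → Vec d → ℝ) (L : ℝ) (hL : 0 < L)
    (hdiff : ∀ i, Differentiable ℝ (f i))
    (hsmooth : ∀ i (w w' : Vec d),
      ‖gradient (f i) w - gradient (f i) w'‖ ≤ L * ‖w - w'‖)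
    (P : Vec d → ℝ) (hP : P = fun w => (n : ℝ)⁻¹ * ∑ i, f i w)
    (wstar : Vec d) (hmin : ∀ w, P wstar ≤ P w)
    (τ : ℝ) (hτ : 0 < τ) (hdom : ∀ w, P w - P wstar ≤ τ * ‖gradient P w‖ ^ 2)
    (w0 : Vec d) (η : ℝ) (hη : 0 < η) (b m : ℕ) (hb : 1 ≤ b) (hbn : b ≤ n)
    (hη2 : η ≤ 2 / (L * (Real.sqrt (1 + 4 * (m : ℝ) / (b : ℝ)
      * (((n : ℝ) - (b : ℝ)) / ((n : ℝ) - 1))) + 1))) :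
    expec (fun p : (Fin (m + 1) → Batch n b) × Fin (m + 1) =>
        ‖gradient P ((sarahState f w0 η b (pad p.1) (p.2 : ℕ)).1)‖ ^ 2)
      ≤ 2 * τ / (η * ((m : ℝ) + 1)) * ‖gradient P w0‖ ^ 2 :=
  sarah_in_gradient_dominated_contraction_general hn f L hL hdiff hsmooth P hP wstar hmin τ hdom w0
    η hη b m hb hbn hη2
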